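/- Let 𝔤 = V₁ ⊕ V₂ be a Métivier real Lie algebra of rank 2m (that is, a step-2 stratified Lie algebra whose Métivier order equals its rank 2m). Then 𝔤 is hypergenerated of order m − 1. -/

import Mathlib

/-!
For `P ⊆ V₁` of dimension `m + 1`, the brackets `[P, P]` span `V₂`: otherwise some `μ ≠ 0` on `V₂`
vanishes on them, so `P` is isotropic for the Kaplan form `J_μ`. The Métivier condition makes
`J_μ` nondegenerate on the `2m`-dimensional space `V₁`, and isotropic subspaces of a
nondegenerate form have at most half its dimension. Since `[𝔤, 𝔤] ⊆ V₂` and `[P, P] ⊆ Lie(P)`,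
the claim follows.
-/

/-- The submodule of a Lie algebra spanned by brackets of elements of two submodules. -/
def bracketSpan {L : Type*} [LieRing L] [LieAlgebra ℝ L] (A B : Submodule ℝ L) :
    Submodule ℝ L :=
  Submodule.span ℝ {z | ∃ x ∈ A, ∃ y ∈ B, ⁅x, y⁆ = z}

/-- The commutator submodule `[𝔤, 𝔤]` of a Lie algebra. -/
def commutatorSubmodule (L : Type*) [LieRing L] [LieAlgebra ℝ L] : Submodule ℝ L :=
  bracketSpan (⊤ : Submodule ℝ L) ⊤

/-- A family `V` of submodules of a real Lie algebra `L` is a stratification of step `s` if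
`L = V 1 ⊕ ⋯ ⊕ V s`, `[V 1, V (i-1)] = V i` for `2 ≤ i ≤ s`, `V s ≠ 0` and `[V 1, V s] = 0`.
We also require `V i = 0` for `i = 0` and `i > s`. -/
structure IsStratification (L : Type*) [LieRing L] [LieAlgebra ℝ L]
    (V : ℕ → Submodule ℝ L) (s : ℕ) : Prop where
  one_le_step : 1 ≤ s
  isInternal : DirectSum.IsInternal (fun i : Fin s => V (i.1 + 1))
  bracket_eq : ∀ i, 2 ≤ i → i ≤ s → bracketSpan (V 1) (V (i - 1)) = V i
  last_ne_bot : V s ≠ ⊥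
  bracket_last_eq_bot : bracketSpan (V 1) (V s) = ⊥
  zero_eq_bot : V 0 = ⊥
  eq_bot_of_gt : ∀ i, s < i → V i = ⊥

/-- A stratified real Lie algebra with strata `V` and rank `m = dim (V 1)` is hypergenerated of
order `k` if every subspace `P ⊆ V 1` with `dim P = m - k` satisfies `[𝔤,𝔤] ⊆ Lie(P)`. -/
def IsHypergenerated (L : Type*) [LieRing L] [LieAlgebra ℝ L]
    (V : ℕ → Submodule ℝ L) (k : ℕ) : Prop :=
  ∀ P : Submodule ℝ L, P ≤ V 1 →
    Module.finrank ℝ P = Module.finrank ℝ (V 1) - k →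
    commutatorSubmodule L ≤ (LieSubalgebra.lieSpan ℝ L (P : Set L)).toSubmodule

/-- The Lie bracket as a bilinear map `V₁ → V₁ → V₂`, given that brackets of elements
of `V₁` lie in `V₂`. -/
noncomputable def bracketBilin {L : Type*} [LieRing L] [LieAlgebra ℝ L]
    (V₁ V₂ : Submodule ℝ L) (h : ∀ v ∈ V₁, ∀ w ∈ V₁, ⁅v, w⁆ ∈ V₂) :
    V₁ →ₗ[ℝ] V₁ →ₗ[ℝ] V₂ :=
  LinearMap.mk₂ ℝ (fun v w => ⟨⁅(v : L), (w : L)⁆, h v v.2 w w.2⟩)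
    (fun x y z => Subtype.ext (by simp [add_lie]))
    (fun c x y => Subtype.ext (by simp))
    (fun x y z => Subtype.ext (by simp [lie_add]))
    (fun c x y => Subtype.ext (by simp))

/-- The Kaplan operator: to a functional `μ` on `V₂` it associates the alternating
bilinear form `(v, w) ↦ μ ⁅v, w⁆` on `V₁`. -/
noncomputable def kaplan {L : Type*} [LieRing L] [LieAlgebra ℝ L]
    (V₁ V₂ : Submodule ℝ L) (h : ∀ v ∈ V₁, ∀ w ∈ V₁, ⁅v, w⁆ ∈ V₂)
    (μ : Module.Dual ℝ V₂) : LinearMap.BilinForm ℝ V₁ :=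
  (bracketBilin V₁ V₂ h).compr₂ μ

/-- The rank of a bilinear form: `dim V - dim ker ω`. -/
noncomputable def formRank {V : Type*} [AddCommGroup V] [Module ℝ V]
    (ω : LinearMap.BilinForm ℝ V) : ℕ :=
  Module.finrank ℝ V - Module.finrank ℝ (LinearMap.ker ω)

/-- The Métivier order of a step-2 stratified Lie algebra: the minimum of the ranks of the
Kaplan forms `J_μ` over nonzero functionals `μ` on `V₂`. -/
noncomputable def metivierOrder {L : Type*} [LieRing L] [LieAlgebra ℝ L]
    (V₁ V₂ : Submodule ℝ L) (h : ∀ v ∈ V₁, ∀ w ∈ V₁, ⁅v, w⁆ ∈ V₂) : ℕ :=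
  sInf {r : ℕ | ∃ μ : Module.Dual ℝ V₂, μ ≠ 0 ∧ r = formRank (kaplan V₁ V₂ h μ)}

theorem IsStratification.lie_mem_sq {L : Type*} [LieRing L] [LieAlgebra ℝ L]
    {V : ℕ → Submodule ℝ L} {s : ℕ} (hst : IsStratification L V s) (hs : 2 ≤ s) :
    ∀ v ∈ V 1, ∀ w ∈ V 1, ⁅v, w⁆ ∈ V 2 := by
  intro v hv w hw
  have h2 : bracketSpan (V 1) (V 1) = V 2 := hst.bracket_eq 2 le_rfl hs
  rw [← h2]
  exact Submodule.subset_span ⟨v, hv, w, hw, rfl⟩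

namespace LinearMap.BilinForm

variable {K V : Type*} [Field K] [AddCommGroup V] [Module K V] [FiniteDimensional K V]

theorem two_mul_finrank_le_of_le_orthogonal {B : LinearMap.BilinForm K V} (hB : B.Nondegenerate)
    {W : Submodule K V} (hW : W ≤ B.orthogonal W) :
    2 * Module.finrank K W ≤ Module.finrank K V := by
  have hmono := Submodule.finrank_mono hW
  rw [finrank_orthogonal hB] at hmono
  have := Submodule.finrank_le W
  omega

end LinearMap.BilinForm

theorem nondegenerate_of_finrank_le_formRank {V : Type*} [AddCommGroup V] [Module ℝ V]
    [FiniteDimensional ℝ V] {ω : LinearMap.BilinForm ℝ V}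
    (h : Module.finrank ℝ V ≤ formRank ω) : ω.Nondegenerate := by
  rw [LinearMap.BilinForm.nondegenerate_iff_ker_eq_bot, ← Submodule.finrank_eq_zero]
  have := Submodule.finrank_le (LinearMap.ker ω)
  unfold formRank at h
  omega

section Kaplan

variable {L : Type*} [LieRing L] [LieAlgebra ℝ L]

theorem kaplan_nondegenerate_of_finrank_le_metivierOrder {V₁ V₂ : Submodule ℝ L}
    [FiniteDimensional ℝ V₁] {h : ∀ v ∈ V₁, ∀ w ∈ V₁, ⁅v, w⁆ ∈ V₂}
    (hmet : Module.finrank ℝ V₁ ≤ metivierOrder V₁ V₂ h) {μ : Module.Dual ℝ V₂} (hμ : μ ≠ 0) :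
    (kaplan V₁ V₂ h μ).Nondegenerate :=
  nondegenerate_of_finrank_le_formRank (hmet.trans (Nat.sInf_le ⟨μ, hμ, rfl⟩))

theorem bracketSpan_bot_left (B : Submodule ℝ L) : bracketSpan ⊥ B = ⊥ := by
  refine le_bot_iff.mp (Submodule.span_le.mpr ?_)
  rintro _ ⟨x, hx, y, -, rfl⟩
  rw [Submodule.mem_bot] at hx
  simp [hx]

theorem bracketSpan_le_lieSpan (P : Submodule ℝ L) :
    bracketSpan P P ≤ (LieSubalgebra.lieSpan ℝ L (P : Set L)).toSubmodule := by
  refine Submodule.span_le.mpr ?_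
  rintro _ ⟨x, hx, y, hy, rfl⟩
  exact LieSubalgebra.lie_mem _ (LieSubalgebra.subset_lieSpan hx)
    (LieSubalgebra.subset_lieSpan hy)

theorem le_bracketSpan_of_kaplan_nondegenerate {V₁ V₂ : Submodule ℝ L} [FiniteDimensional ℝ V₁]
    {h : ∀ v ∈ V₁, ∀ w ∈ V₁, ⁅v, w⁆ ∈ V₂}
    (hnd : ∀ μ : Module.Dual ℝ V₂, μ ≠ 0 → (kaplan V₁ V₂ h μ).Nondegenerate)
    {P : Submodule ℝ L} (hP : P ≤ V₁) (hdim : Module.finrank ℝ V₁ < 2 * Module.finrank ℝ P) :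
    V₂ ≤ bracketSpan P P := by
  set S := (bracketSpan P P).comap V₂.subtype
  suffices hS : S = ⊤ from fun x hx => (hS ▸ Submodule.mem_top : (⟨x, hx⟩ : V₂) ∈ S)
  by_contra hS
  obtain ⟨μ, hμ, hμS⟩ :=
    Submodule.exists_dual_map_eq_bot_of_lt_top (lt_top_iff_ne_top.mpr hS) inferInstance
  set P' := P.comap V₁.subtype
  have hP' : Module.finrank ℝ P' = Module.finrank ℝ P :=
    (Submodule.comapSubtypeEquivOfLe hP).finrank_eq
  have hiso : P' ≤ (kaplan V₁ V₂ h μ).orthogonal P' := by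
    intro v hv
    rw [LinearMap.BilinForm.mem_orthogonal_iff]
    intro w hw
    change μ (bracketBilin V₁ V₂ h w v) = 0
    have hwv : bracketBilin V₁ V₂ h w v ∈ S := Submodule.subset_span ⟨w, hw, v, hv, rfl⟩
    simpa [hμS] using Submodule.mem_map_of_mem (f := μ) hwv
  have := LinearMap.BilinForm.two_mul_finrank_le_of_le_orthogonal (hnd μ hμ) hiso
  omega

end Kaplan

namespace IsStratification

variable {L : Type*} [LieRing L] [LieAlgebra ℝ L] {V : ℕ → Submodule ℝ L}

theorem one_ne_bot {s : ℕ} (hst : IsStratification L V s) (hs : 2 ≤ s) : V 1 ≠ ⊥ := by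
  intro h1
  apply hst.last_ne_bot
  rw [← hst.bracket_eq s hs le_rfl, h1, bracketSpan_bot_left]

theorem sup_eq_top_of_step_two (hst : IsStratification L V 2) : V 1 ⊔ V 2 = ⊤ := by
  rw [← hst.isInternal.submodule_iSup_eq_top]
  simp [iSup, Fin.range_fin_succ, Set.range_unique, Fin.tail]

theorem lie_eq_zero_of_mem_two (hst : IsStratification L V 2) (x : L) {y : L} (hy : y ∈ V 2) :
    ⁅x, y⁆ = 0 := by
  have h1 : ∀ a ∈ V 1, ⁅a, y⁆ = 0 := fun a ha => by
    have hz : ⁅a, y⁆ ∈ bracketSpan (V 1) (V 2) := Submodule.subset_span ⟨a, ha, y, hy, rfl⟩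
    rwa [hst.bracket_last_eq_bot, Submodule.mem_bot] at hz
  have h2 : ∀ a ∈ V 2, ⁅a, y⁆ = 0 := by
    rw [← hst.bracket_eq 2 le_rfl le_rfl]
    intro a ha
    induction ha using Submodule.span_induction with
    | mem _ hz =>
      obtain ⟨b, hb, c, hc, rfl⟩ := hz
      rw [lie_lie, h1 b hb, h1 c hc, lie_zero, lie_zero, sub_zero]
    | zero => exact zero_lie y
    | add _ _ _ _ hb hc => rw [add_lie, hb, hc, add_zero]
    | smul _ _ _ hb => rw [smul_lie, hb, smul_zero]
  obtain ⟨x₁, hx₁, x₂, hx₂, rfl⟩ :=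
    Submodule.mem_sup.mp (hst.sup_eq_top_of_step_two ▸ Submodule.mem_top : x ∈ V 1 ⊔ V 2)
  rw [add_lie, h1 x₁ hx₁, h2 x₂ hx₂, add_zero]

theorem commutatorSubmodule_le_of_step_two (hst : IsStratification L V 2) :
    commutatorSubmodule L ≤ V 2 := by
  refine Submodule.span_le.mpr ?_
  rintro _ ⟨x, -, y, -, rfl⟩
  obtain ⟨y₁, hy₁, y₂, hy₂, rfl⟩ :=
    Submodule.mem_sup.mp (hst.sup_eq_top_of_step_two ▸ Submodule.mem_top : y ∈ V 1 ⊔ V 2)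
  obtain ⟨x₁, hx₁, x₂, hx₂, rfl⟩ :=
    Submodule.mem_sup.mp (hst.sup_eq_top_of_step_two ▸ Submodule.mem_top : x ∈ V 1 ⊔ V 2)
  rw [lie_add, hst.lie_eq_zero_of_mem_two _ hy₂, add_lie, ← lie_skew x₂ y₁,
    hst.lie_eq_zero_of_mem_two _ hx₂, neg_zero, add_zero, add_zero]
  exact hst.lie_mem_sq le_rfl x₁ hx₁ y₁ hy₁

end IsStratification

/-- A Métivier real Lie algebra of rank `2m` (a step-2 stratified Lie
algebra whose Métivier order equals its rank `2m`) is hypergenerated of order `m - 1`. -/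
theorem metivier_isHypergenerated {L : Type*} [LieRing L] [LieAlgebra ℝ L]
    [FiniteDimensional ℝ L] (V : ℕ → Submodule ℝ L) (m : ℕ)
    (hst : IsStratification L V 2) (hrank : Module.finrank ℝ (V 1) = 2 * m)
    (hmet : metivierOrder (V 1) (V 2) (hst.lie_mem_sq le_rfl) = Module.finrank ℝ (V 1)) :
    IsHypergenerated L V (m - 1) := by
  intro P hP hdimP
  -- `m - 1` truncates at `m = 0`, so that case has to be excluded first
  have hm : m ≠ 0 := fun hm => hst.one_ne_bot le_rfl <|
    Submodule.finrank_eq_zero.mp (by rw [hrank, hm])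
  calc commutatorSubmodule L ≤ V 2 := hst.commutatorSubmodule_le_of_step_two
    _ ≤ bracketSpan P P :=
      le_bracketSpan_of_kaplan_nondegenerate
        (fun _ hμ => kaplan_nondegenerate_of_finrank_le_metivierOrder hmet.ge hμ) hP
        (by omega)
    _ ≤ _ := bracketSpan_le_lieSpan P
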